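/- arXiv:1506.06842 — 2 statements merged into one kernel-verified Lean document; each statement's English description precedes it below -/
import Mathlib

section
/- For complex shifts α, β, γ, δ with all of Re(α+γ), Re(α+δ), Re(β+γ), Re(β+δ) greater than 0, the Dirichlet series ∑_{n=1}^∞ τ_{α,β}(n) τ_{γ,δ}(n) n^{−1} converges and equals ζ(1+α+γ) ζ(1+α+δ) ζ(1+β+γ) ζ(1+β+δ) / ζ(2+α+β+γ+δ). -/
open Complex

/-- The generalized divisor function `τ_{α,β}(n) = ∑_{hk=n} h^{−α} k^{−β}`. -/
noncomputable def tauShift (α β : ℂ) (n : ℕ) : ℂ :=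
  ∑ p ∈ n.divisorsAntidiagonal, (p.1 : ℂ) ^ (-α) * (p.2 : ℂ) ^ (-β)

/-!
Pairs of factorizations `hk = uv` of a common integer are parametrized by
`h = ar, k = st, u = as, v = rt` with `r, s` coprime (take `a = gcd(h, u)`), and in these
parameters
`h^{-α} k^{-β} u^{-γ} v^{-δ} / (hk) = a^{-(1+α+γ)} r^{-(1+α+δ)} s^{-(1+β+γ)} t^{-(1+β+δ)}`.
The series is therefore a product of two zeta series (in `a` and `t`) and a sum over coprime
pairs `(r, s)`, which Möbius inversion evaluates as `ζ(σ) ζ(τ) / ζ(σ + τ)`. Everything converges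
absolutely, which justifies the regroupings.
-/

open Finset
open scoped ArithmeticFunction.Moebius

theorem HasSum.sum_finset_fiberwise {ι κ M : Type*} [AddCommMonoid M] [TopologicalSpace M]
    [ContinuousAdd M] [RegularSpace M] {f : ι → M} {a : M} (hf : HasSum f a) (π : ι → κ)
    (S : κ → Finset ι) (hS : ∀ c, ∀ x ∈ S c, π x = c) (hf_supp : ∀ x, f x ≠ 0 → x ∈ S (π x)) :
    HasSum (fun c ↦ ∑ x ∈ S c, f x) a := by
  refine ((Equiv.sigmaFiberEquiv π).hasSum_iff.2 hf).sigma fun c ↦ ?_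
  have hfiber : HasSum ((π ⁻¹' {c}).indicator f) (∑ x ∈ S c, f x) := by
    rw [← sum_congr rfl fun x hx ↦ Set.indicator_of_mem (s := π ⁻¹' {c}) (hS c x hx) f]
    refine hasSum_sum_of_ne_finset_zero fun x hx ↦ ?_
    by_contra hne
    obtain ⟨hxc, hfx⟩ := Set.indicator_apply_ne_zero.1 hne
    exact hx (Set.mem_singleton_iff.1 hxc ▸ hf_supp x hfx)
  exact hasSum_subtype_iff_indicator.2 hfiber

theorem HasSum.mul_of_finiteDimensional {ι κ R : Type*} [NormedRing R] [NormedSpace ℝ R]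
    [FiniteDimensional ℝ R] {f : ι → R} {g : κ → R} {a b : R} (hf : HasSum f a)
    (hg : HasSum g b) : HasSum (fun x : ι × κ ↦ f x.1 * g x.2) (a * b) :=
  haveI := FiniteDimensional.complete ℝ R
  hf.mul hg <| summable_mul_of_summable_norm (summable_norm_iff.2 hf.summable)
    (summable_norm_iff.2 hg.summable)

theorem Set.BijOn.hasSum_indicator_comp_iff {ι κ M : Type*} [AddCommMonoid M]
    [TopologicalSpace M] {e : ι → κ} {s : Set ι} {t : Set κ} (he : Set.BijOn e s t) (F : κ → M)
    {a : M} : HasSum (s.indicator (F ∘ e)) a ↔ HasSum (t.indicator F) a :=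
  hasSum_subtype_iff_indicator.symm.trans <|
    ((he.equiv e).hasSum_iff (f := F ∘ Subtype.val)).trans hasSum_subtype_iff_indicator

theorem ArithmeticFunction.sum_divisors_moebius {R : Type*} [Ring R] (n : ℕ) :
    ∑ d ∈ n.divisors, (μ d : R) = if n = 1 then 1 else 0 := by
  simpa only [coe_mul_zeta_apply, intCoe_apply, one_apply] using
    congr($(coe_moebius_mul_coe_zeta (R := R)) n)

theorem hasSum_natCast_cpow_neg {s : ℂ} (hs : 1 < s.re) :
    HasSum (fun n : ℕ ↦ (n : ℂ) ^ (-s)) (riemannZeta s) := by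
  have h : HasSum (LSeries.term 1 s) (riemannZeta s) := LSeriesHasSum_one hs
  convert h using 1
  ext n
  rw [LSeries.term_of_ne_zero' (ne_zero_of_one_lt_re hs), Pi.one_apply, cpow_neg, one_div]

theorem hasSum_moebius_mul_natCast_cpow_neg {s : ℂ} (hs : 1 < s.re) :
    HasSum (fun n : ℕ ↦ (μ n : ℂ) * (n : ℂ) ^ (-s)) (riemannZeta s)⁻¹ := by
  have hL := LSeries_one_mul_Lseries_moebius hs
  rw [LSeries_one_eq_riemannZeta hs] at hL
  rw [inv_eq_of_mul_eq_one_right hL]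
  have h : HasSum (LSeries.term (fun n ↦ (μ n : ℂ)) s) _ :=
    (ArithmeticFunction.LSeriesSummable_moebius_iff.2 hs).LSeriesHasSum
  convert h using 1
  ext n
  rw [LSeries.term_def₀ (by simp)]

theorem natCast_cpow_eq_mul_natCast_div_cpow {d m : ℕ} (hdm : d ∣ m) (z : ℂ) :
    (m : ℂ) ^ z = (d : ℂ) ^ z * ((m / d : ℕ) : ℂ) ^ z := by
  rw [← natCast_mul_natCast_cpow, ← Nat.cast_mul, Nat.mul_div_cancel' hdm]

theorem sum_divisors_gcd_moebius_mul_cpow (m n : ℕ) (s t : ℂ) :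
    ∑ d ∈ (m.gcd n).divisors, (μ d : ℂ) * (d : ℂ) ^ (-(s + t)) *
        (((m / d : ℕ) : ℂ) ^ (-s) * ((n / d : ℕ) : ℂ) ^ (-t)) =
      if m.Coprime n then (m : ℂ) ^ (-s) * (n : ℂ) ^ (-t) else 0 := by
  have hterm : ∀ d ∈ (m.gcd n).divisors, (μ d : ℂ) * (d : ℂ) ^ (-(s + t)) *
      (((m / d : ℕ) : ℂ) ^ (-s) * ((n / d : ℕ) : ℂ) ^ (-t)) =
      μ d * ((m : ℂ) ^ (-s) * (n : ℂ) ^ (-t)) := by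
    intro d hd
    have hd0 : (d : ℂ) ≠ 0 := Nat.cast_ne_zero.2 (Nat.ne_of_gt (Nat.pos_of_mem_divisors hd))
    have hdgcd := Nat.dvd_of_mem_divisors hd
    rw [natCast_cpow_eq_mul_natCast_div_cpow (hdgcd.trans (m.gcd_dvd_left n)),
      natCast_cpow_eq_mul_natCast_div_cpow (hdgcd.trans (m.gcd_dvd_right n)), neg_add,
      cpow_add _ _ hd0]
    ring
  rw [sum_congr rfl hterm, ← sum_mul, ArithmeticFunction.sum_divisors_moebius]
  simp only [Nat.Coprime, ite_mul, one_mul, zero_mul]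

theorem hasSum_coprime_natCast_cpow_neg {s t : ℂ} (hs : 1 < s.re) (ht : 1 < t.re) :
    HasSum (fun p : ℕ × ℕ ↦ if p.1.Coprime p.2 then (p.1 : ℂ) ^ (-s) * (p.2 : ℂ) ^ (-t) else 0)
      (riemannZeta s * riemannZeta t / riemannZeta (s + t)) := by
  have hst : 1 < (s + t).re := by rw [add_re]; linarith
  have hprod := (hasSum_moebius_mul_natCast_cpow_neg hst).mul_of_finiteDimensional
    ((hasSum_natCast_cpow_neg hs).mul_of_finiteDimensional (hasSum_natCast_cpow_neg ht))
  rw [div_eq_inv_mul]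
  refine (hprod.sum_finset_fiberwise (fun x ↦ (x.1 * x.2.1, x.1 * x.2.2))
    (fun p ↦ (p.1.gcd p.2).divisors.image fun d ↦ (d, p.1 / d, p.2 / d)) ?_ ?_).congr_fun ?_
  · rintro ⟨m, n⟩ x hx
    obtain ⟨d, hd, rfl⟩ := mem_image.1 hx
    have hdgcd := Nat.dvd_of_mem_divisors hd
    simp [Nat.mul_div_cancel' (hdgcd.trans (m.gcd_dvd_left n)),
      Nat.mul_div_cancel' (hdgcd.trans (m.gcd_dvd_right n))]
  · rintro ⟨d, m, n⟩ hne
    have hd : d ≠ 0 := by rintro rfl; simp at hne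
    have hm : m ≠ 0 := by
      rintro rfl; simp [zero_cpow (neg_ne_zero.2 (ne_zero_of_one_lt_re hs))] at hne
    refine mem_image.2 ⟨d, Nat.mem_divisors.2 ⟨Nat.dvd_gcd (dvd_mul_right d m) (dvd_mul_right d n),
      Nat.gcd_ne_zero_left (mul_ne_zero hd hm)⟩, ?_⟩
    simp [Nat.mul_div_cancel_left _ (Nat.pos_of_ne_zero hd)]
  · rintro ⟨m, n⟩
    rw [sum_image fun _ _ _ _ h ↦ (Prod.ext_iff.1 h).1]
    exact (sum_divisors_gcd_moebius_mul_cpow m n s t).symm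

def factorPairs : Set ((ℕ × ℕ) × (ℕ × ℕ)) :=
  {((h, k), (u, v)) : (ℕ × ℕ) × (ℕ × ℕ) | h * k = u * v ∧ h * k ≠ 0}

def coprimeParams : Set (ℕ × (ℕ × ℕ) × ℕ) :=
  {(a, (r, s), t) : ℕ × (ℕ × ℕ) × ℕ | a ≠ 0 ∧ r ≠ 0 ∧ s ≠ 0 ∧ t ≠ 0 ∧ r.Coprime s}

def factorPairOfParams : ℕ × (ℕ × ℕ) × ℕ → (ℕ × ℕ) × (ℕ × ℕ)
  | (a, (r, s), t) => ((a * r, s * t), (a * s, r * t))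

theorem bijOn_factorPairOfParams : Set.BijOn factorPairOfParams coprimeParams factorPairs := by
  refine ⟨?_, ?_, ?_⟩
  · rintro ⟨a, ⟨r, s⟩, t⟩ ⟨ha, hr, hs, ht, -⟩
    exact ⟨by ring, mul_ne_zero (mul_ne_zero ha hr) (mul_ne_zero hs ht)⟩
  · rintro ⟨a, ⟨r, s⟩, t⟩ ⟨ha, -, hs, -, hrs⟩ ⟨a', ⟨r', s'⟩, t'⟩ ⟨-, -, -, -, hrs'⟩ heq
    simp only [factorPairOfParams, Prod.mk.injEq] at heq
    obtain ⟨⟨har, hst⟩, has, -⟩ := heq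
    have gcd_eq {a r s : ℕ} (hrs : r.Coprime s) : (a * r).gcd (a * s) = a := by
      rw [Nat.gcd_mul_left, hrs.gcd_eq_one, mul_one]
    obtain rfl : a = a' := by rw [← gcd_eq (a := a) hrs, har, has, gcd_eq hrs']
    obtain rfl : r = r' := mul_left_cancel₀ ha har
    obtain rfl : s = s' := mul_left_cancel₀ ha has
    obtain rfl : t = t' := mul_left_cancel₀ hs hst
    rfl
  · rintro ⟨⟨h, k⟩, u, v⟩ ⟨hkuv, hk0⟩
    obtain ⟨r, s, hrs, hr, hs⟩ := Nat.exists_coprime h u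
    generalize h.gcd u = a at hr hs
    subst hr hs
    obtain ⟨⟨hr, ha⟩, hk⟩ := And.imp_left mul_ne_zero_iff.1 (mul_ne_zero_iff.1 hk0)
    have hrk : r * k = s * v := mul_left_cancel₀ ha (by linarith)
    obtain ⟨t, rfl⟩ : s ∣ k := hrs.symm.dvd_of_dvd_mul_left ⟨v, hrk⟩
    obtain ⟨hs, ht⟩ := mul_ne_zero_iff.1 hk
    obtain rfl : v = r * t := mul_left_cancel₀ hs (by linarith)
    exact ⟨(a, (r, s), t), ⟨ha, hr, hs, ht, hrs⟩, by simp only [factorPairOfParams]; ring_nf⟩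

noncomputable def tauPairTerm (α β γ δ : ℂ) : (ℕ × ℕ) × (ℕ × ℕ) → ℂ
  | ((h, k), (u, v)) =>
    (h : ℂ) ^ (-α) * (k : ℂ) ^ (-β) * ((u : ℂ) ^ (-γ) * (v : ℂ) ^ (-δ)) / (h * k : ℕ)

theorem tauShift_mul_tauShift_div_eq_sum (α β γ δ : ℂ) (n : ℕ) :
    tauShift α β n * tauShift γ δ n / n =
      ∑ x ∈ n.divisorsAntidiagonal ×ˢ n.divisorsAntidiagonal, tauPairTerm α β γ δ x := by
  rw [tauShift, tauShift, sum_mul_sum, sum_div, sum_product]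
  refine sum_congr rfl fun p hp ↦ ?_
  rw [sum_div]
  refine sum_congr rfl fun q _ ↦ ?_
  rw [← (Nat.mem_divisorsAntidiagonal.1 hp).1]
  rfl

theorem HasSum.sum_divisorsAntidiagonal_product {M : Type*} [AddCommMonoid M] [TopologicalSpace M]
    [ContinuousAdd M] [RegularSpace M] {F : (ℕ × ℕ) × (ℕ × ℕ) → M} {a : M}
    (hF : HasSum (factorPairs.indicator F) a) :
    HasSum (fun n : ℕ ↦ ∑ x ∈ n.divisorsAntidiagonal ×ˢ n.divisorsAntidiagonal, F x) a := by
  refine (hF.sum_finset_fiberwise (fun x ↦ x.1.1 * x.1.2)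
    (fun n : ℕ ↦ n.divisorsAntidiagonal ×ˢ n.divisorsAntidiagonal) ?_ ?_).congr_fun fun n ↦ ?_
  · rintro n ⟨⟨h, k⟩, u, v⟩ hx
    exact (Nat.mem_divisorsAntidiagonal.1 (mem_product.1 hx).1).1
  · rintro ⟨⟨h, k⟩, u, v⟩ hx
    obtain ⟨⟨hkuv, hk0⟩, -⟩ := Set.indicator_apply_ne_zero.1 hx
    exact mem_product.2 ⟨Nat.mem_divisorsAntidiagonal.2 ⟨rfl, hk0⟩,
      Nat.mem_divisorsAntidiagonal.2 ⟨hkuv.symm, hk0⟩⟩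
  · refine sum_congr rfl fun ⟨⟨h, k⟩, u, v⟩ hx ↦ (Set.indicator_of_mem ?_ F).symm
    obtain ⟨hp, hq⟩ := mem_product.1 hx
    obtain ⟨hhk, hn⟩ := Nat.mem_divisorsAntidiagonal.1 hp
    exact ⟨hhk.trans (Nat.mem_divisorsAntidiagonal.1 hq).1.symm, hhk ▸ hn⟩

theorem tauPairTerm_factorPairOfParams (α β γ δ : ℂ) {a r s t : ℕ} (ha : a ≠ 0) (hr : r ≠ 0)
    (hs : s ≠ 0) (ht : t ≠ 0) :
    tauPairTerm α β γ δ (factorPairOfParams (a, (r, s), t)) =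
      (a : ℂ) ^ (-(1 + α + γ)) * ((r : ℂ) ^ (-(1 + α + δ)) * (s : ℂ) ^ (-(1 + β + γ)) *
        (t : ℂ) ^ (-(1 + β + δ))) := by
  have split {x : ℕ} (hx : x ≠ 0) (c d : ℂ) :
      (x : ℂ) ^ (-(1 + c + d)) = (x : ℂ)⁻¹ * (x : ℂ) ^ (-c) * (x : ℂ) ^ (-d) := by
    rw [show -(1 + c + d) = -1 + -c + -d by ring, cpow_add _ _ (Nat.cast_ne_zero.2 hx),
      cpow_add _ _ (Nat.cast_ne_zero.2 hx), cpow_neg_one]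
  simp only [tauPairTerm, factorPairOfParams, Nat.cast_mul, natCast_mul_natCast_cpow, split ha,
    split hr, split hs, split ht, div_eq_mul_inv, mul_inv]
  ring

theorem indicator_coprimeParams_tauPairTerm {α β γ δ : ℂ} (hαγ : 1 + α + γ ≠ 0)
    (hαδ : 1 + α + δ ≠ 0) (hβγ : 1 + β + γ ≠ 0) (hβδ : 1 + β + δ ≠ 0) (y : ℕ × (ℕ × ℕ) × ℕ) :
    coprimeParams.indicator (tauPairTerm α β γ δ ∘ factorPairOfParams) y =
      (y.1 : ℂ) ^ (-(1 + α + γ)) *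
        ((if y.2.1.1.Coprime y.2.1.2 then
            (y.2.1.1 : ℂ) ^ (-(1 + α + δ)) * (y.2.1.2 : ℂ) ^ (-(1 + β + γ)) else 0) *
          (y.2.2 : ℂ) ^ (-(1 + β + δ))) := by
  obtain ⟨a, ⟨r, s⟩, t⟩ := y
  by_cases hy : (a, (r, s), t) ∈ coprimeParams
  · obtain ⟨ha, hr, hs, ht, hrs⟩ := id hy
    rw [Set.indicator_of_mem hy, Function.comp_apply,
      tauPairTerm_factorPairOfParams α β γ δ ha hr hs ht, if_pos hrs]
  · rw [Set.indicator_of_notMem hy]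
    simp only [coprimeParams, Set.mem_ofPred_eq, not_and_or, not_not] at hy
    have z1 := zero_cpow (neg_ne_zero.2 hαγ)
    have z2 := zero_cpow (neg_ne_zero.2 hαδ)
    have z3 := zero_cpow (neg_ne_zero.2 hβγ)
    have z4 := zero_cpow (neg_ne_zero.2 hβδ)
    rcases hy with rfl | rfl | rfl | rfl | hrs
    any_goals simp only [Nat.cast_zero, z1, z2, z3, z4, zero_mul, mul_zero, ite_self]
    rw [if_neg hrs, zero_mul, mul_zero]

/-- Shifted Ramanujan identity: for `Re(α+γ), Re(α+δ), Re(β+γ), Re(β+δ) > 0`,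
`∑_{n=1}^∞ τ_{α,β}(n) τ_{γ,δ}(n) n^{−1}` converges and equals
`ζ(1+α+γ) ζ(1+α+δ) ζ(1+β+γ) ζ(1+β+δ) / ζ(2+α+β+γ+δ)`. -/
theorem tauShift_correlation_series (α β γ δ : ℂ)
    (h1 : 0 < (α + γ).re) (h2 : 0 < (α + δ).re) (h3 : 0 < (β + γ).re) (h4 : 0 < (β + δ).re) :
    HasSum (fun n : ℕ => tauShift α β n * tauShift γ δ n / (n : ℂ))
      (riemannZeta (1 + α + γ) * riemannZeta (1 + α + δ) * riemannZeta (1 + β + γ) *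
        riemannZeta (1 + β + δ) / riemannZeta (2 + α + β + γ + δ)) := by
  have one_lt_re {z w : ℂ} (h : 0 < (z + w).re) : 1 < (1 + z + w).re := by
    simp only [add_re, one_re] at h ⊢; linarith
  have hQ := (hasSum_natCast_cpow_neg (one_lt_re h1)).mul_of_finiteDimensional
    ((hasSum_coprime_natCast_cpow_neg (one_lt_re h2) (one_lt_re h3)).mul_of_finiteDimensional
      (hasSum_natCast_cpow_neg (one_lt_re h4)))
  have hF := (bijOn_factorPairOfParams.hasSum_indicator_comp_iff (tauPairTerm α β γ δ)).1 <|
    hQ.congr_fun <| indicator_coprimeParams_tauPairTerm (ne_zero_of_one_lt_re (one_lt_re h1))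
      (ne_zero_of_one_lt_re (one_lt_re h2)) (ne_zero_of_one_lt_re (one_lt_re h3))
      (ne_zero_of_one_lt_re (one_lt_re h4))
  convert hF.sum_divisorsAntidiagonal_product using 1
  · ext n
    exact tauShift_mul_tauShift_div_eq_sum α β γ δ n
  · rw [show 1 + α + δ + (1 + β + γ) = 2 + α + β + γ + δ by ring]
    ring
end

section
/- For 0 < Re w < 1 and u > 0, ∫_0^∞ (iv)^w e^{−2πvu} dv/v + ∫_0^∞ (−iv)^w e^{−2πvu} dv/v = 2 cos(πw/2) (2π)^{−w} Γ(w) u^{−w}, where (±iv)^w is defined using the principal branch of the logarithm. -/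
open Complex Real MeasureTheory

/-!
No contour rotation is needed: for real `v > 0` the principal branch
splits `(c v)^w = c^w v^w`, so each integral is `(±i)^w` times the Gamma integral
`∫₀^∞ v^{w-1} e^{-2πuv} dv = (2πu)^{-w} Γ(w)`, and `i^w + (-i)^w = 2 cos(πw/2)`.
-/

namespace Complex

theorem mul_ofReal_cpow (c : ℂ) {v : ℝ} (hv : 0 < v) (w : ℂ) :
    (c * v) ^ w = c ^ w * (v : ℂ) ^ w := by
  have hv0 : (v : ℂ) ≠ 0 := ofReal_ne_zero.mpr hv.ne'
  rcases eq_or_ne c 0 with rfl | hc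
  · rcases eq_or_ne w 0 with rfl | hw
    · simp
    · simp [zero_cpow hw]
  rw [cpow_def_of_ne_zero (mul_ne_zero hc hv0), log_mul_ofReal v hv c hc, add_mul, exp_add,
    ofReal_log hv.le, ← cpow_def_of_ne_zero hc, ← cpow_def_of_ne_zero hv0, mul_comm]

theorem integral_mul_ofReal_cpow_mul_exp_neg_mul_div_Ioi (c : ℂ) {a : ℂ} {r : ℝ}
    (ha : 0 < a.re) (hr : 0 < r) :
    ∫ v in Set.Ioi (0 : ℝ), (c * v) ^ a * exp (-(r * v)) / v = c ^ a * (r : ℂ) ^ (-a) * Gamma a := by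
  have hintegrand : ∀ v ∈ Set.Ioi (0 : ℝ),
      (c * v) ^ a * exp (-(r * v)) / v = c ^ a * ((v : ℂ) ^ (a - 1) * exp (-(r * v))) := by
    intro v hv
    have hv0 : (v : ℂ) ≠ 0 := ofReal_ne_zero.mpr (ne_of_gt hv)
    rw [mul_ofReal_cpow c hv, cpow_sub _ _ hv0, cpow_one]
    ring
  rw [setIntegral_congr_fun measurableSet_Ioi hintegrand, integral_const_mul,
    integral_cpow_mul_exp_neg_mul_Ioi ha hr, one_div, inv_cpow_ofReal_nonneg hr.le, ← cpow_neg,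
    mul_assoc]

theorem I_cpow_add_neg_I_cpow (w : ℂ) : I ^ w + (-I) ^ w = 2 * cos (π * w / 2) := by
  rw [cpow_def_of_ne_zero I_ne_zero, cpow_def_of_ne_zero (neg_ne_zero.mpr I_ne_zero), log_I,
    log_neg_I, cos]
  ring_nf

end Complex

theorem rotated_gamma_integrals_general (w : ℂ) (hw0 : 0 < w.re)
    (u : ℝ) (hu : 0 < u) :
    (∫ v in Set.Ioi (0 : ℝ), (Complex.I * v) ^ w * Complex.exp (-2 * Real.pi * v * u) / v) +
      (∫ v in Set.Ioi (0 : ℝ), (-(Complex.I) * v) ^ w * Complex.exp (-2 * Real.pi * v * u) / v)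
      = 2 * Complex.cos (Real.pi * w / 2) * (2 * Real.pi : ℂ) ^ (-w) * Complex.Gamma w *
        (u : ℂ) ^ (-w) := by
  have hexp : ∀ v : ℝ, (-2 * π * v * u : ℂ) = -(((2 * π * u : ℝ) : ℂ) * v) := fun v => by
    push_cast; ring
  have hr : 0 < 2 * π * u := by positivity
  simp only [hexp, integral_mul_ofReal_cpow_mul_exp_neg_mul_div_Ioi _ hw0 hr]
  rw [ofReal_mul, mul_cpow_ofReal_nonneg (by positivity) hu.le, ← I_cpow_add_neg_I_cpow]
  push_cast
  ring

/-- For `0 < Re w < 1` and `u > 0`: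
`∫_0^∞ (iv)^w e^{−2πvu} dv/v + ∫_0^∞ (−iv)^w e^{−2πvu} dv/v
  = 2 cos(πw/2) (2π)^{−w} Γ(w) u^{−w}`. -/
theorem rotated_gamma_integrals (w : ℂ) (hw0 : 0 < w.re) (hw1 : w.re < 1)
    (u : ℝ) (hu : 0 < u) :
    (∫ v in Set.Ioi (0 : ℝ), (Complex.I * v) ^ w * Complex.exp (-2 * Real.pi * v * u) / v) +
      (∫ v in Set.Ioi (0 : ℝ), (-(Complex.I) * v) ^ w * Complex.exp (-2 * Real.pi * v * u) / v)
      = 2 * Complex.cos (Real.pi * w / 2) * (2 * Real.pi : ℂ) ^ (-w) * Complex.Gamma w *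
        (u : ℂ) ^ (-w) :=
  rotated_gamma_integrals_general w hw0 u hu
end
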